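/- In F_2^8, let X₁ and X₂ be two disjoint planes (3-subspaces) and let C be a solid (4-subspace) disjoint from both X₁ and X₂. Then C is contained in at least [4 choose 2]₂ − 2·[3 choose 2]₂ = 35 − 14 = 21 six-dimensional subspaces S satisfying dim(S∩X₁) = dim(S∩X₂) = 1. -/
import Mathlib

open Module Submodule

set_option linter.unusedSectionVars false

lemma nat_card_sigma {ι : Type*} [Fintype ι] (f : ι → Type*) [∀ i, Finite (f i)] :
    Nat.card (Σ i, f i) = ∑ i, Nat.card (f i) := by
  letI : ∀ i, Fintype (f i) := fun i => Fintype.ofFinite _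
  simp [Nat.card_eq_fintype_card, Fintype.card_sigma]

section RankLemmas
variable {K : Type*} [Field K] {V : Type*} [AddCommGroup V] [Module K V]
  [FiniteDimensional K V]

lemma aux_rk {W : Type*} [AddCommGroup W] [Module K W] (f : V →ₗ[K] W) (S : Submodule K V) :
    finrank K ↥(S.map f) + finrank K ↥(S ⊓ LinearMap.ker f) = finrank K ↥S := by
  have h := LinearMap.finrank_range_add_finrank_ker (f.comp S.subtype)
  rw [LinearMap.range_comp, range_subtype, LinearMap.ker_comp] at h
  rw [← h]
  congr 1
  rw [← Submodule.finrank_map_subtype_eq S (comap S.subtype (LinearMap.ker f)),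
    map_comap_subtype, inf_comm]

lemma rk_map_of_disjoint {W : Type*} [AddCommGroup W] [Module K W] (f : V →ₗ[K] W)
    (S : Submodule K V) (h : S ⊓ LinearMap.ker f = ⊥) :
    finrank K ↥(S.map f) = finrank K ↥S := by
  have := aux_rk f S
  rw [h, finrank_bot, add_zero] at this
  exact this

lemma rk_comap_mkQ (C : Submodule K V) (P : Submodule K (V ⧸ C)) :
    finrank K ↥(P.comap C.mkQ) = finrank K ↥P + finrank K ↥C := by
  have hle : C ≤ P.comap C.mkQ := fun x hx => by
    simp [mem_comap, (Submodule.Quotient.mk_eq_zero C).2 hx, mkQ_apply]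
  have h := aux_rk C.mkQ (P.comap C.mkQ)
  rw [Submodule.map_comap_eq_of_surjective (mkQ_surjective C), ker_mkQ,
    inf_eq_right.mpr hle] at h
  exact h.symm

lemma map_mkQ_inf (C S X : Submodule K V) (hCS : C ≤ S) :
    (S ⊓ X).map C.mkQ = S.map C.mkQ ⊓ X.map C.mkQ := by
  refine le_antisymm (le_inf (map_mono inf_le_left) (map_mono inf_le_right)) ?_
  rintro q ⟨hq1, hq2⟩
  obtain ⟨x, hxS, rfl⟩ := hq1
  obtain ⟨y, hyX, hxy⟩ := hq2
  have hxy' : x - y ∈ C := by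
    rw [← ker_mkQ C, LinearMap.mem_ker, map_sub, hxy, sub_self]
  have hyS : y ∈ S := by
    have := S.sub_mem hxS (hCS hxy')
    simpa using this
  exact ⟨y, ⟨hyS, hyX⟩, hxy⟩

end RankLemmas

section Count
variable {V : Type*} [AddCommGroup V] [Module (ZMod 2) V] [FiniteDimensional (ZMod 2) V]

instance finV : Finite V := Module.finite_of_finite (ZMod 2)

instance finSub : Finite (Submodule (ZMod 2) V) :=
  Finite.of_injective (fun P => (P : Set V)) SetLike.coe_injective

lemma card_nonzero : Nat.card {v : V // v ≠ 0} = 2 ^ (finrank (ZMod 2) V) - 1 := by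
  classical
  cases nonempty_fintype V
  have hcard : Fintype.card V = 2 ^ finrank (ZMod 2) V := by
    have := card_eq_pow_finrank (K := ZMod 2) (V := V)
    rwa [ZMod.card] at this
  rw [Nat.card_eq_fintype_card]
  simp only [ne_eq]
  rw [Fintype.card_subtype_compl, Fintype.card_subtype_eq, hcard]

lemma zmod2_cases : ∀ a : ZMod 2, a = 0 ∨ a = 1 := by decide

lemma span_eq_of_rank_one {P : Submodule (ZMod 2) V} (hP : finrank (ZMod 2) ↥P = 1) :
    ∃ v : V, v ≠ 0 ∧ P = Submodule.span (ZMod 2) {v} := by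
  obtain ⟨v, hv0, hspan⟩ := (finrank_eq_one_iff' (V := ↥P)).mp hP
  refine ⟨v.1, by simpa using hv0, le_antisymm ?_ ?_⟩
  · intro x hx
    obtain ⟨c, hc⟩ := hspan ⟨x, hx⟩
    have : c • (v : V) = x := congrArg Subtype.val hc
    rw [← this]
    exact Submodule.smul_mem _ _ (Submodule.mem_span_singleton_self _)
  · rw [Submodule.span_le, Set.singleton_subset_iff]
    exact v.2

lemma card_rank_one :
    Nat.card {P : Submodule (ZMod 2) V // finrank (ZMod 2) ↥P = 1} =
      2 ^ (finrank (ZMod 2) V) - 1 := by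
  rw [← card_nonzero (V := V)]
  symm
  apply Nat.card_eq_of_bijective
    (f := fun v : {v : V // v ≠ 0} =>
      (⟨Submodule.span (ZMod 2) {v.1}, finrank_span_singleton v.2⟩ :
        {P : Submodule (ZMod 2) V // finrank (ZMod 2) ↥P = 1}))
  constructor
  · rintro ⟨v, hv⟩ ⟨w, hw⟩ h
    simp only [Subtype.mk.injEq] at h ⊢
    have hvw : v ∈ Submodule.span (ZMod 2) {w} := by
      rw [← h]; exact Submodule.mem_span_singleton_self _
    obtain ⟨c, hc⟩ := Submodule.mem_span_singleton.mp hvw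
    rcases zmod2_cases c with h0 | h1
    · exfalso; apply hv; rw [← hc, h0, zero_smul]
    · rw [← hc, h1, one_smul]
  · rintro ⟨P, hP⟩
    obtain ⟨v, hv, rfl⟩ := span_eq_of_rank_one hP
    exact ⟨⟨v, hv⟩, rfl⟩

lemma card_planes_through (v : V) (hv : v ≠ 0) :
    Nat.card {P : Submodule (ZMod 2) V // finrank (ZMod 2) ↥P = 2 ∧ v ∈ P} =
      Nat.card {P' : Submodule (ZMod 2) (V ⧸ (Submodule.span (ZMod 2) {v})) //
        finrank (ZMod 2) ↥P' = 1} := by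
  symm
  set C := Submodule.span (ZMod 2) {v} with hCdef
  have hC : finrank (ZMod 2) ↥C = 1 := finrank_span_singleton hv
  apply Nat.card_eq_of_bijective (f := fun P' : {P' : Submodule (ZMod 2) (V ⧸ C) //
      finrank (ZMod 2) ↥P' = 1} =>
    (⟨P'.1.comap C.mkQ, by rw [rk_comap_mkQ, P'.2, hC], by
      have : (v : V) ∈ C := Submodule.mem_span_singleton_self _
      simp [mem_comap, (Submodule.Quotient.mk_eq_zero C).2 this, mkQ_apply]⟩ :
      {P : Submodule (ZMod 2) V // finrank (ZMod 2) ↥P = 2 ∧ v ∈ P}))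
  constructor
  · rintro P₁ P₂ h
    have := congrArg Subtype.val h
    exact Subtype.ext (comap_injective_of_surjective (mkQ_surjective C) this)
  · rintro ⟨P, hP2, hvP⟩
    have hCP : C ≤ P := by rw [hCdef, Submodule.span_le, Set.singleton_subset_iff]; exact hvP
    refine ⟨⟨P.map C.mkQ, ?_⟩, ?_⟩
    · have h := aux_rk C.mkQ P
      rw [ker_mkQ, inf_eq_right.mpr hCP, hP2, hC] at h
      omega
    · apply Subtype.ext
      simp only
      rw [Submodule.comap_map_eq, ker_mkQ, sup_eq_left.mpr hCP]

lemma card_planes_master :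
    3 * Nat.card {P : Submodule (ZMod 2) V // finrank (ZMod 2) ↥P = 2} =
      (2 ^ (finrank (ZMod 2) V) - 1) * (2 ^ (finrank (ZMod 2) V - 1) - 1) := by
  classical
  set n := finrank (ZMod 2) V with hn
  -- incidence sigma types
  letI : Fintype {v : V // v ≠ 0} := Fintype.ofFinite _
  letI : Fintype {P : Submodule (ZMod 2) V // finrank (ZMod 2) ↥P = 2} := Fintype.ofFinite _
  have key : Nat.card (Σ v : {v : V // v ≠ 0},
        {P : Submodule (ZMod 2) V // finrank (ZMod 2) ↥P = 2 ∧ v.1 ∈ P}) =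
      Nat.card (Σ P : {P : Submodule (ZMod 2) V // finrank (ZMod 2) ↥P = 2},
        {v : V // v ∈ P.1 ∧ v ≠ 0}) := by
    apply Nat.card_congr
    exact { toFun := fun x => ⟨⟨x.2.1, x.2.2.1⟩, ⟨x.1.1, x.2.2.2, x.1.2⟩⟩
            invFun := fun y => ⟨⟨y.2.1, y.2.2.2⟩, ⟨y.1.1, y.1.2, y.2.2.1⟩⟩
            left_inv := fun x => rfl
            right_inv := fun y => rfl }
  rw [nat_card_sigma, nat_card_sigma] at key
  -- left side: each v contributes 2^(n-1) - 1
  have hleft : ∀ v : {v : V // v ≠ 0},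
      Nat.card {P : Submodule (ZMod 2) V // finrank (ZMod 2) ↥P = 2 ∧ v.1 ∈ P} =
        2 ^ (n - 1) - 1 := by
    rintro ⟨v, hv⟩
    rw [card_planes_through v hv, card_rank_one]
    congr 2
    have h := Submodule.finrank_quotient_add_finrank (Submodule.span (ZMod 2) {v})
    rw [finrank_span_singleton hv] at h
    omega
  -- right side: each plane contains 3 nonzero vectors
  have hright : ∀ P : {P : Submodule (ZMod 2) V // finrank (ZMod 2) ↥P = 2},
      Nat.card {v : V // v ∈ P.1 ∧ v ≠ 0} = 3 := by
    rintro ⟨P, hP⟩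
    have e : {v : V // v ∈ P ∧ v ≠ 0} ≃ {w : ↥P // w ≠ 0} :=
      { toFun := fun x => ⟨⟨x.1, x.2.1⟩,
          fun h => x.2.2 (by simpa using congrArg Subtype.val h)⟩
        invFun := fun w => ⟨w.1.1, w.1.2,
          fun h => w.2 (Subtype.ext (by simpa using h))⟩
        left_inv := fun x => rfl
        right_inv := fun w => rfl }
    rw [Nat.card_congr e, card_nonzero (V := ↥P), hP]
    norm_num
  simp only [hleft, hright, Finset.sum_const, Finset.card_univ, smul_eq_mul] at key
  rw [← Nat.card_eq_fintype_card, ← Nat.card_eq_fintype_card, card_nonzero] at key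
  rw [mul_comm]
  rw [← key]

lemma card_planes_in (H : Submodule (ZMod 2) V) :
    Nat.card {P : Submodule (ZMod 2) V // finrank (ZMod 2) ↥P = 2 ∧ P ≤ H} =
      Nat.card {P' : Submodule (ZMod 2) ↥H // finrank (ZMod 2) ↥P' = 2} := by
  symm
  apply Nat.card_eq_of_bijective (f := fun P' : {P' : Submodule (ZMod 2) ↥H //
      finrank (ZMod 2) ↥P' = 2} =>
    (⟨P'.1.map H.subtype, by rw [Submodule.finrank_map_subtype_eq]; exact P'.2,
      Submodule.map_subtype_le H P'.1⟩ :
      {P : Submodule (ZMod 2) V // finrank (ZMod 2) ↥P = 2 ∧ P ≤ H}))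
  constructor
  · rintro P₁ P₂ h
    have := congrArg Subtype.val h
    exact Subtype.ext (Submodule.map_injective_of_injective (Submodule.injective_subtype H) this)
  · rintro ⟨P, hP2, hPH⟩
    refine ⟨⟨P.comap H.subtype, ?_⟩, ?_⟩
    · have hmc : (P.comap H.subtype).map H.subtype = P := by
        rw [Submodule.map_comap_subtype, inf_eq_right.mpr hPH]
      rw [← Submodule.finrank_map_subtype_eq H (P.comap H.subtype), hmc]
      exact hP2
    · apply Subtype.ext
      simp only
      rw [Submodule.map_comap_subtype, inf_eq_right.mpr hPH]

lemma plane_dichotomy (hV : finrank (ZMod 2) V = 4) (P H : Submodule (ZMod 2) V)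
    (hP : finrank (ZMod 2) ↥P = 2) (hH : finrank (ZMod 2) ↥H = 3) :
    finrank (ZMod 2) ↥(P ⊓ H) = 1 ∨ P ≤ H := by
  have hsup := Submodule.finrank_sup_add_finrank_inf_eq P H
  rw [hP, hH] at hsup
  have hle4 : finrank (ZMod 2) ↥(P ⊔ H) ≤ 4 := by
    rw [← hV]; exact Submodule.finrank_le _
  have hge3 : 3 ≤ finrank (ZMod 2) ↥(P ⊔ H) := by
    rw [← hH]; exact Submodule.finrank_mono le_sup_right
  have h12 : finrank (ZMod 2) ↥(P ⊓ H) = 1 ∨ finrank (ZMod 2) ↥(P ⊓ H) = 2 := by omega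
  rcases h12 with h | h
  · exact Or.inl h
  · right
    have : P ⊓ H = P := eq_of_le_of_finrank_le inf_le_left (by rw [hP, h])
    rw [← this]; exact inf_le_right

lemma count_in_Q (hV : finrank (ZMod 2) V = 4) (H₁ H₂ : Submodule (ZMod 2) V)
    (hH₁ : finrank (ZMod 2) ↥H₁ = 3) (hH₂ : finrank (ZMod 2) ↥H₂ = 3) :
    21 ≤ Nat.card {P : Submodule (ZMod 2) V // finrank (ZMod 2) ↥P = 2 ∧
      finrank (ZMod 2) ↥(P ⊓ H₁) = 1 ∧ finrank (ZMod 2) ↥(P ⊓ H₂) = 1} := by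
  classical
  set A : Set (Submodule (ZMod 2) V) := {P | finrank (ZMod 2) ↥P = 2} with hA
  set G : Set (Submodule (ZMod 2) V) := {P | finrank (ZMod 2) ↥P = 2 ∧
      finrank (ZMod 2) ↥(P ⊓ H₁) = 1 ∧ finrank (ZMod 2) ↥(P ⊓ H₂) = 1} with hG
  set B₁ : Set (Submodule (ZMod 2) V) := {P | finrank (ZMod 2) ↥P = 2 ∧ P ≤ H₁} with hB₁
  set B₂ : Set (Submodule (ZMod 2) V) := {P | finrank (ZMod 2) ↥P = 2 ∧ P ≤ H₂} with hB₂
  have hsub : A ⊆ G ∪ (B₁ ∪ B₂) := by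
    intro P hP
    rcases plane_dichotomy hV P H₁ hP hH₁ with h1 | h1
    · rcases plane_dichotomy hV P H₂ hP hH₂ with h2 | h2
      · exact Or.inl ⟨hP, h1, h2⟩
      · exact Or.inr (Or.inr ⟨hP, h2⟩)
    · exact Or.inr (Or.inl ⟨hP, h1⟩)
  have hcardA : A.ncard = 35 := by
    have h := card_planes_master (V := V)
    rw [hV] at h
    norm_num at h
    have e : A.ncard = Nat.card {P : Submodule (ZMod 2) V // finrank (ZMod 2) ↥P = 2} := by
      rw [← Nat.card_coe_set_eq]
      rfl
    omega
  have hcardB₁ : B₁.ncard = 7 := by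
    have h := card_planes_in H₁
    have h2 := card_planes_master (V := ↥H₁)
    rw [hH₁] at h2
    norm_num at h2
    have e : B₁.ncard = Nat.card {P : Submodule (ZMod 2) V //
        finrank (ZMod 2) ↥P = 2 ∧ P ≤ H₁} := by
      rw [← Nat.card_coe_set_eq]
      rfl
    omega
  have hcardB₂ : B₂.ncard = 7 := by
    have h := card_planes_in H₂
    have h2 := card_planes_master (V := ↥H₂)
    rw [hH₂] at h2
    norm_num at h2
    have e : B₂.ncard = Nat.card {P : Submodule (ZMod 2) V //
        finrank (ZMod 2) ↥P = 2 ∧ P ≤ H₂} := by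
      rw [← Nat.card_coe_set_eq]
      rfl
    omega
  have hAle : A.ncard ≤ G.ncard + (B₁.ncard + B₂.ncard) := by
    calc A.ncard ≤ (G ∪ (B₁ ∪ B₂)).ncard :=
          Set.ncard_le_ncard hsub (Set.toFinite _)
      _ ≤ G.ncard + (B₁ ∪ B₂).ncard := Set.ncard_union_le _ _
      _ ≤ G.ncard + (B₁.ncard + B₂.ncard) := by
          exact Nat.add_le_add_left (Set.ncard_union_le _ _) _
  have eG : Nat.card {P : Submodule (ZMod 2) V // finrank (ZMod 2) ↥P = 2 ∧
      finrank (ZMod 2) ↥(P ⊓ H₁) = 1 ∧ finrank (ZMod 2) ↥(P ⊓ H₂) = 1} = G.ncard := by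
    rw [← Nat.card_coe_set_eq]
    rfl
  omega

end Count

/-- In `F_2^8`, if `X₁, X₂` are disjoint planes and `C` is a solid disjoint from both, then
`C` lies in at least `[4 2]₂ − 2·[3 2]₂ = 21` six-subspaces `S` with
`dim(S∩X₁) = dim(S∩X₂) = 1`. -/
theorem stmt_10 (X₁ X₂ C : Submodule (ZMod 2) (Fin 8 → ZMod 2))
    (h₁ : finrank (ZMod 2) ↥X₁ = 3) (h₂ : finrank (ZMod 2) ↥X₂ = 3)
    (hC : finrank (ZMod 2) ↥C = 4)
    (hdisj : X₁ ⊓ X₂ = ⊥) (hC₁ : C ⊓ X₁ = ⊥) (hC₂ : C ⊓ X₂ = ⊥) :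
    21 ≤ Nat.card {S : Submodule (ZMod 2) (Fin 8 → ZMod 2) //
      finrank (ZMod 2) ↥S = 6 ∧ C ≤ S ∧ finrank (ZMod 2) ↥(S ⊓ X₁) = 1 ∧
      finrank (ZMod 2) ↥(S ⊓ X₂) = 1} := by
  have hV8 : finrank (ZMod 2) (Fin 8 → ZMod 2) = 8 := Module.finrank_fin_fun (ZMod 2)
  have hQ4 : finrank (ZMod 2) ((Fin 8 → ZMod 2) ⧸ C) = 4 := by
    have h := Submodule.finrank_quotient_add_finrank C
    rw [hC, hV8] at h
    omega
  set H₁ : Submodule (ZMod 2) ((Fin 8 → ZMod 2) ⧸ C) := X₁.map C.mkQ with hH₁def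
  set H₂ : Submodule (ZMod 2) ((Fin 8 → ZMod 2) ⧸ C) := X₂.map C.mkQ with hH₂def
  have hXdisj : ∀ (X : Submodule (ZMod 2) (Fin 8 → ZMod 2)), C ⊓ X = ⊥ →
      finrank (ZMod 2) ↥(X.map C.mkQ) = finrank (ZMod 2) ↥X := by
    intro X hX
    apply rk_map_of_disjoint
    rw [ker_mkQ, inf_comm]
    exact hX
  have hH₁ : finrank (ZMod 2) ↥H₁ = 3 := by rw [hH₁def, hXdisj X₁ hC₁, h₁]
  have hH₂ : finrank (ZMod 2) ↥H₂ = 3 := by rw [hH₂def, hXdisj X₂ hC₂, h₂]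
  have hcount := count_in_Q hQ4 H₁ H₂ hH₁ hH₂
  have key : ∀ P : Submodule (ZMod 2) ((Fin 8 → ZMod 2) ⧸ C),
      (finrank (ZMod 2) ↥P = 2 ∧ finrank (ZMod 2) ↥(P ⊓ H₁) = 1 ∧
        finrank (ZMod 2) ↥(P ⊓ H₂) = 1) →
      finrank (ZMod 2) ↥(P.comap C.mkQ) = 6 ∧ C ≤ P.comap C.mkQ ∧
        finrank (ZMod 2) ↥((P.comap C.mkQ) ⊓ X₁) = 1 ∧
        finrank (ZMod 2) ↥((P.comap C.mkQ) ⊓ X₂) = 1 := by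
    rintro P ⟨hP2, hPH₁, hPH₂⟩
    have hCS : C ≤ P.comap C.mkQ := fun x hx => by
      simp [mem_comap, mkQ_apply, (Submodule.Quotient.mk_eq_zero C).2 hx]
    have main : ∀ (X : Submodule (ZMod 2) (Fin 8 → ZMod 2)), C ⊓ X = ⊥ →
        finrank (ZMod 2) ↥((P.comap C.mkQ) ⊓ X) =
          finrank (ZMod 2) ↥(P ⊓ X.map C.mkQ) := by
      intro X hX
      have hmap : ((P.comap C.mkQ) ⊓ X).map C.mkQ = P ⊓ X.map C.mkQ := by
        rw [map_mkQ_inf C _ X hCS,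
          Submodule.map_comap_eq_of_surjective (mkQ_surjective C)]
      have hrk : finrank (ZMod 2) ↥(((P.comap C.mkQ) ⊓ X).map C.mkQ) =
          finrank (ZMod 2) ↥((P.comap C.mkQ) ⊓ X) := by
        apply rk_map_of_disjoint
        rw [ker_mkQ]
        apply le_bot_iff.mp
        calc P.comap C.mkQ ⊓ X ⊓ C ≤ X ⊓ C := inf_le_inf_right C inf_le_right
          _ = ⊥ := by rw [inf_comm]; exact hX
      rw [← hrk, hmap]
    refine ⟨?_, hCS, ?_, ?_⟩
    · rw [rk_comap_mkQ, hP2, hC]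
    · rw [main X₁ hC₁]; exact hPH₁
    · rw [main X₂ hC₂]; exact hPH₂
  refine le_trans hcount (Nat.card_le_card_of_injective
    (fun P => ⟨P.1.comap C.mkQ, key P.1 P.2⟩) ?_)
  intro x y h
  exact Subtype.ext (comap_injective_of_surjective (mkQ_surjective C)
    (congrArg Subtype.val h))
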